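/- Rigidity of token counting (decomposition): Under the hypotheses of the conservation step (NDCS network, ∑_j n_j constant), for every j one has n_j({s_i : i→j}) = ∑_{i: i→j} R_i^j(s_i) + n_j({r_i : i→j}), where R_i^j(s_i) is the single-variable difference function. -/

import Mathlib

/-!
Fix a target `j` and a source `i → j`. The increment of `n j` caused by changing `s i` does not
depend on any other coordinate `s i'`: if `i' ↛ j` this is locality of `n j`; if `i' → j`, then
by NDCS no other target `j'` hears both `i` and `i'`, so each other increment of `n j'` is
unaffected by `s i'`, and conservation (the increments of all `n j'` sum to zero) transfers this
to `n j`. Hence the increments are those taken at the reference point `r`, and changing the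
coordinates of `r` into those of `s` one at a time telescopes to the stated sum.
-/

open Function Finset

theorem DependsOn.apply_update_of_notMem {ι β : Type*} [DecidableEq ι] {α : ι → Type*}
    {f : (∀ i, α i) → β} {s : Set ι} (hf : DependsOn f s) {i : ι} (hi : i ∉ s)
    (x : ∀ i, α i) (a : α i) : f (Function.update x i a) = f x :=
  hf fun _ hk ↦ update_of_ne (ne_of_mem_of_not_mem hk hi) _ _

theorem DependsOn.apply_update_sub_apply_update_comm {ι G : Type*} [DecidableEq ι]
    [AddCommGroup G] {α : ι → Type*} {f : (∀ i, α i) → G} {s : Set ι} (hf : DependsOn f s)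
    {i i' : ι} (hii' : i ≠ i') (hs : i ∉ s ∨ i' ∉ s) (c : ∀ i, α i) (b : α i') (a a' : α i) :
    f (Function.update (Function.update c i' b) i a)
        - f (Function.update (Function.update c i' b) i a') =
      f (Function.update c i a) - f (Function.update c i a') := by
  rcases hs with hi | hi'
  · simp only [hf.apply_update_of_notMem hi, sub_self]
  · simp only [update_comm hii'.symm, hf.apply_update_of_notMem hi']

section Fintype

variable {ι : Type*} [Fintype ι] [DecidableEq ι] {α : ι → Type*}

theorem eq_of_forall_apply_update_eq {β : Type*} {g : (∀ i, α i) → β}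
    (hg : ∀ x i a, g (update x i a) = g x) (x y : ∀ i, α i) : g x = g y := by
  suffices ∀ T : Finset ι, g (T.piecewise x y) = g y by simpa using this univ
  intro T
  induction T using Finset.induction_on with
  | empty => simp
  | insert i T _ ih => rw [piecewise_insert, hg, ih]

theorem eq_sum_apply_update_sub_add {G : Type*} [AddCommGroup G] {g : (∀ i, α i) → G}
    (r : ∀ i, α i)
    (hg : ∀ x i a, g (update x i a) - g (update x i (r i)) = g (update r i a) - g r)
    (x : ∀ i, α i) : g x = ∑ i, (g (update r i (x i)) - g r) + g r := by
  suffices ∀ T : Finset ι, g (T.piecewise x r) = ∑ i ∈ T, (g (update r i (x i)) - g r) + g r by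
    simpa using this univ
  intro T
  induction T using Finset.induction_on with
  | empty => simp
  | insert i T hi ih =>
    have hri : update (T.piecewise x r) i (r i) = T.piecewise x r := by
      rw [← T.piecewise_eq_of_notMem x r hi, update_eq_self]
    rw [piecewise_insert, sum_insert hi, ← hg, hri, ih]
    abel

end Fintype

theorem Finset.eq_of_sum_eq_sum_of_forall_ne {κ G : Type*} [Fintype κ] [DecidableEq κ]
    [AddCommGroup G] {f g : κ → G} (h : ∑ k, f k = ∑ k, g k) (j : κ)
    (hne : ∀ k ≠ j, f k = g k) : f j = g j := by
  rw [← add_sum_erase _ _ (mem_univ j), ← add_sum_erase _ _ (mem_univ j),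
    sum_congr rfl fun k hk ↦ hne k (ne_of_mem_erase hk)] at h
  exact add_right_cancel h

/-- The NDCS condition. -/
def NoFourCycle {ι κ : Type*} (E : ι → κ → Prop) : Prop :=
  ¬ ∃ (i i' : ι) (j j' : κ), i ≠ i' ∧ j ≠ j' ∧ E i j ∧ E i j' ∧ E i' j ∧ E i' j'

section Network

variable {ι κ G : Type*} [DecidableEq ι] [Fintype κ] [AddCommGroup G] {α : ι → Type*}
  {E : ι → κ → Prop} {n : κ → (∀ i, α i) → G}

theorem update_sub_update_comm_of_noFourCycle (hE : NoFourCycle E)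
    (hdep : ∀ j, DependsOn (n j) {i | E i j}) {N : G} (hconst : ∀ x, ∑ j, n j x = N)
    (j : κ) {i i' : ι} (hii' : i ≠ i') (c : ∀ i, α i) (b : α i') (a a' : α i) :
    n j (update (update c i' b) i a) - n j (update (update c i' b) i a') =
      n j (update c i a) - n j (update c i a') := by
  classical
  by_cases hj : E i j ∧ E i' j
  · have hsum (x : ∀ i, α i) : ∑ k, (n k (update x i a) - n k (update x i a')) = 0 := by
      rw [sum_sub_distrib, hconst, hconst, sub_self]
    refine eq_of_sum_eq_sum_of_forall_ne ((hsum _).trans (hsum c).symm) j fun k hk ↦ ?_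
    refine (hdep k).apply_update_sub_apply_update_comm hii' ?_ c b a a'
    by_contra! hk'
    exact hE ⟨i, i', j, k, hii', hk.symm, hj.1, hk'.1, hj.2, hk'.2⟩
  · exact (hdep j).apply_update_sub_apply_update_comm hii' (not_and_or.mp hj) c b a a'

theorem update_sub_update_eq_of_noFourCycle [Fintype ι] (hE : NoFourCycle E)
    (hdep : ∀ j, DependsOn (n j) {i | E i j}) {N : G} (hconst : ∀ x, ∑ j, n j x = N)
    (j : κ) {i : ι} (a a' : α i) (c d : ∀ i, α i) :
    n j (update c i a) - n j (update c i a') = n j (update d i a) - n j (update d i a') := by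
  refine eq_of_forall_apply_update_eq
    (g := fun x ↦ n j (update x i a) - n j (update x i a')) (fun x i' b ↦ ?_) c d
  rcases eq_or_ne i i' with rfl | hii'
  · simp only [update_idem]
  · exact update_sub_update_comm_of_noFourCycle hE hdep hconst j hii' x b a a'

end Network

theorem TC_decomposition_step
    {I J : ℕ} (S : Fin I → Type*)
    (E : Fin I → Fin J → Prop) [∀ i j, Decidable (E i j)]
    (hNDCS : ¬ ∃ (i i' : Fin I) (j j' : Fin J),
      i ≠ i' ∧ j ≠ j' ∧ E i j ∧ E i j' ∧ E i' j ∧ E i' j')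
    (n : Fin J → (∀ i, S i) → ℤ)
    (hdep : ∀ j, ∀ s s' : ∀ i, S i, (∀ i, E i j → s i = s' i) → n j s = n j s')
    (N : ℤ) (hconst : ∀ s : ∀ i, S i, ∑ j, n j s = N)
    (r : ∀ i, S i) :
    ∀ (j : Fin J) (s : ∀ i, S i),
      n j s = (∑ i ∈ Finset.univ.filter (fun i => E i j),
          (n j (Function.update r i (s i)) - n j r)) + n j r := by
  intro j s
  have hdep' (j : Fin J) : DependsOn (n j) {i | E i j} := fun x y ↦ hdep j x y
  have hrigid (x : ∀ i, S i) (i : Fin I) (a : S i) :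
      n j (update x i a) - n j (update x i (r i)) = n j (update r i a) - n j r := by
    rw [update_sub_update_eq_of_noFourCycle hNDCS hdep' hconst j a (r i) x r, update_eq_self]
  rw [eq_sum_apply_update_sub_add r hrigid s, sum_filter_of_ne]
  intro i _ hi
  by_contra hij
  exact hi (by rw [(hdep' j).apply_update_of_notMem hij, sub_self])
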